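/- (Joint concentration lemma.) Let ρ ∈ L^1_+(R^3) and σ ∈ L^1_+(R^2) with 0 < ∫ρ ≤ M and 0 < ∫σ ≤ M, and suppose ∫∫_{|x-(ỹ,0)|<r_0} ρ(x)σ(ỹ) dx dỹ > δ_0 for some δ_0, r_0 > 0. Then with ε_0 := δ_0^2/(8M^3) and R_0 := 3r_0 there exists ã ∈ R^2 such that ∫_{|x-(ã,0)|<R_0} ρ(x) dx > ε_0 and ∫_{|ỹ-ã|<R_0} σ(ỹ) dỹ > ε_0. -/

import Mathlib

/-!
Let `F(x, y) = ρ(x) σ(y)` on the pairs with `|x - (y, 0)| < r₀`. If no `a` carries mass `> ε`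
of both densities, split the `y`-variable according to whether the `ρ`-mass of the ball of
radius `r₀` around `(y, 0)` is `≤ ε`. On that part, integrating `F` in `x` first gives at most
`ε ∫ σ`. On the rest, the `σ`-mass of every ball of radius `2r₀` around one of its points is
`≤ ε`, and for fixed `x` all `y` with `|x - (y, 0)| < r₀` lie in such a ball around any one of
them, so integrating in `y` first gives at most `ε ∫ ρ`. Hence `∫∫ F ≤ ε (∫ ρ + ∫ σ) ≤ 2Mε`,
which already yields the bound with `ε = δ₀ / (2M)`; as a ball's `ρ`-mass is at most `M`, this
forces `δ₀ < 2M²`, whence `δ₀ / (2M) ≥ δ₀² / (8M³)`.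
-/

open MeasureTheory
noncomputable section

abbrev E3 := EuclideanSpace ℝ (Fin 3)
abbrev E2 := EuclideanSpace ℝ (Fin 2)

/-- The embedding `ỹ ↦ (ỹ, 0)` of the plane into `ℝ³`. -/
def emb (y : E2) : E3 := (WithLp.equiv 2 (Fin 3 → ℝ)).symm ![y 0, y 1, 0]

open Metric Set

section Concentration

variable {X Y : Type*} [PseudoMetricSpace X]

def nearPairs (e : Y → X) (r : ℝ) : Set (X × Y) := {p | dist p.1 (e p.2) < r}

variable {e : Y → X} {r : ℝ}

@[simp] lemma mem_nearPairs {p : X × Y} : p ∈ nearPairs e r ↔ dist p.1 (e p.2) < r := Iff.rfl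

lemma indicator_nearPairs_apply_eq_left (G : X × Y → ℝ) (x : X) (y : Y) :
    (nearPairs e r).indicator G (x, y) = (ball (e y) r).indicator (fun x => G (x, y)) x :=
  rfl

lemma indicator_nearPairs_apply_eq_right (G : X × Y → ℝ) (x : X) (y : Y) :
    (nearPairs e r).indicator G (x, y) = (e ⁻¹' ball x r).indicator (fun y => G (x, y)) y := by
  simp only [indicator, mem_nearPairs, mem_preimage, mem_ball']

variable [PseudoMetricSpace Y]

lemma Isometry.preimage_ball_subset_ball (he : Isometry e) {x : X} {y : Y}
    (hy : dist x (e y) < r) : e ⁻¹' ball x r ⊆ ball y (2 * r) := fun y' hy' => by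
  rw [mem_preimage, mem_ball'] at hy'
  rw [mem_ball, ← he.dist_eq]
  linarith [dist_triangle_left (e y') (e y) x]

variable [MeasurableSpace Y] {ν : Measure Y} {σ : Y → ℝ} {ε : ℝ}

lemma setIntegral_preimage_ball_inter_le (he : Isometry e) (hσ0 : 0 ≤ σ)
    (hσi : Integrable σ ν) (hε : 0 ≤ ε) {C : Set Y}
    (hC : ∀ y ∈ C, ∫ y' in ball y (2 * r), σ y' ∂ν ≤ ε) (x : X) :
    ∫ y in e ⁻¹' ball x r ∩ C, σ y ∂ν ≤ ε := by
  rcases (e ⁻¹' ball x r ∩ C).eq_empty_or_nonempty with h | ⟨y, hyx, hyC⟩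
  · simp [h, hε]
  · refine le_trans (setIntegral_mono_set hσi.integrableOn (ae_of_all _ hσ0) ?_) (hC y hyC)
    exact (inter_subset_left.trans (he.preimage_ball_subset_ball (mem_ball'.1 hyx))).eventuallyLE

variable [MeasurableSpace X] [BorelSpace X] [BorelSpace Y] [SecondCountableTopology Y]
  {μ : Measure X} {ρ : X → ℝ}

lemma measurableSet_nearPairs (he : Continuous e) : MeasurableSet (nearPairs e r) :=
  (isOpen_lt (continuous_fst.dist (he.comp continuous_snd)) continuous_const).measurableSet

lemma integrable_indicator_nearPairs (he : Continuous e) (hρi : Integrable ρ μ)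
    (hσi : Integrable σ ν) :
    Integrable ((nearPairs e r).indicator fun p => ρ p.1 * σ p.2) (μ.prod ν) :=
  (hρi.mul_prod hσi).indicator (measurableSet_nearPairs he)

variable [SFinite μ] [SFinite ν]

lemma measurable_setIntegral_ball_comp (he : Continuous e) (hρm : Measurable ρ) :
    Measurable fun y => ∫ x in ball (e y) r, ρ x ∂μ := by
  have hG : StronglyMeasurable ((nearPairs e r).indicator fun p : X × Y => ρ p.1) :=
    ((hρm.comp measurable_fst).indicator (measurableSet_nearPairs he)).stronglyMeasurable
  convert (hG.integral_prod_left' (μ := μ)).measurable using 2 with y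
  rw [← integral_indicator measurableSet_ball]
  simp only [indicator_nearPairs_apply_eq_left]

lemma integral_indicator_nearPairs_le_of_ae_setIntegral_ball_le (he : Continuous e)
    (hσ0 : 0 ≤ σ) (hρi : Integrable ρ μ) (hσi : Integrable σ ν)
    (hsmall : ∀ᵐ y ∂ν, ∫ x in ball (e y) r, ρ x ∂μ ≤ ε) :
    ∫ p, (nearPairs e r).indicator (fun p => ρ p.1 * σ p.2) p ∂(μ.prod ν) ≤ ε * ∫ y, σ y ∂ν := by
  have hF := integrable_indicator_nearPairs (r := r) he hρi hσi
  have hinner (y : Y) : ∫ x, (nearPairs e r).indicator (fun p => ρ p.1 * σ p.2) (x, y) ∂μ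
      = (∫ x in ball (e y) r, ρ x ∂μ) * σ y := by
    simp only [indicator_nearPairs_apply_eq_left]
    rw [integral_indicator measurableSet_ball, integral_mul_const]
  rw [integral_prod_symm _ hF, ← integral_const_mul]
  refine integral_mono_ae hF.integral_prod_right (hσi.const_mul ε) ?_
  filter_upwards [hsmall] with y hy
  rw [hinner]
  exact mul_le_mul_of_nonneg_right hy (hσ0 y)

lemma integral_indicator_nearPairs_restrict_le_of_setIntegral_ball_le (he : Isometry e)
    (hρ0 : 0 ≤ ρ) (hσ0 : 0 ≤ σ) (hρi : Integrable ρ μ) (hσi : Integrable σ ν) (hε : 0 ≤ ε) {C : Set Y}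
    (hsmall : ∀ y ∈ C, ∫ y' in ball y (2 * r), σ y' ∂ν ≤ ε) :
    ∫ p, (nearPairs e r).indicator (fun p => ρ p.1 * σ p.2) p ∂(μ.prod (ν.restrict C))
      ≤ ε * ∫ x, ρ x ∂μ := by
  have hF := integrable_indicator_nearPairs (r := r) he.continuous hρi (hσi.restrict (s := C))
  have hinner (x : X) : ∫ y, (nearPairs e r).indicator (fun p => ρ p.1 * σ p.2) (x, y) ∂ν.restrict C
      = ρ x * ∫ y in e ⁻¹' ball x r ∩ C, σ y ∂ν := by
    have hball : MeasurableSet (e ⁻¹' ball x r) := he.continuous.measurable measurableSet_ball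
    simp only [indicator_nearPairs_apply_eq_right]
    rw [integral_indicator hball, integral_const_mul, Measure.restrict_restrict hball]
  rw [integral_prod _ hF, mul_comm, ← integral_mul_const]
  refine integral_mono hF.integral_prod_left (hρi.mul_const ε) fun x => ?_
  rw [hinner]
  exact mul_le_mul_of_nonneg_left
    (setIntegral_preimage_ball_inter_le he hσ0 hσi hε hsmall x) (hρ0 x)

theorem exists_setIntegral_ball_gt_of_lt_integral_integral (he : Isometry e)
    (hρm : Measurable ρ) (hρ0 : 0 ≤ ρ) (hσ0 : 0 ≤ σ) (hρi : Integrable ρ μ)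
    (hσi : Integrable σ ν) (hε : 0 ≤ ε)
    (hconc : ε * (∫ x, ρ x ∂μ + ∫ y, σ y ∂ν)
      < ∫ x, ∫ y, (nearPairs e r).indicator (fun p => ρ p.1 * σ p.2) (x, y) ∂ν ∂μ) :
    ∃ a, ε < ∫ x in ball (e a) r, ρ x ∂μ ∧ ε < ∫ y in ball a (2 * r), σ y ∂ν := by
  by_contra! hsmall
  set F := (nearPairs e r).indicator fun p : X × Y => ρ p.1 * σ p.2
  set B := {y | ∫ x in ball (e y) r, ρ x ∂μ ≤ ε}
  have hB : MeasurableSet B :=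
    measurableSet_le (measurable_setIntegral_ball_comp he.continuous hρm) measurable_const
  have hrestrict (C : Set Y) : (μ.prod ν).restrict (Prod.snd ⁻¹' C) = μ.prod (ν.restrict C) := by
    rw [← univ_prod, ← Measure.prod_restrict, Measure.restrict_univ]
  have hsmallB : ∫ p, F p ∂(μ.prod (ν.restrict B)) ≤ ε * ∫ y, σ y ∂ν :=
    (integral_indicator_nearPairs_le_of_ae_setIntegral_ball_le he.continuous hσ0 hρi
      hσi.restrict (ae_restrict_of_forall_mem hB fun _ hy => hy)).trans
      (mul_le_mul_of_nonneg_left (setIntegral_le_integral hσi (ae_of_all _ hσ0)) hε)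
  have hsmallBc : ∫ p, F p ∂(μ.prod (ν.restrict Bᶜ)) ≤ ε * ∫ x, ρ x ∂μ :=
    integral_indicator_nearPairs_restrict_le_of_setIntegral_ball_le he hρ0 hσ0 hρi hσi hε
      fun y hy => hsmall y (not_le.1 hy)
  have hF := integrable_indicator_nearPairs (r := r) he.continuous hρi hσi
  rw [← integral_prod _ hF, ← integral_add_compl (measurable_snd hB) hF, ← preimage_compl,
    hrestrict, hrestrict] at hconc
  linarith

end Concentration

lemma isometry_emb : Isometry emb :=
  Isometry.of_dist_eq fun y y' => by
    simp [EuclideanSpace.dist_eq, emb, Fin.sum_univ_three, Fin.sum_univ_two]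

theorem statement9_general (ρ : E3 → ℝ) (σ : E2 → ℝ) (M δ₀ r₀ : ℝ)
    (hρm : Measurable ρ)
    (hρ0 : ∀ x, 0 ≤ ρ x) (hσ0 : ∀ y, 0 ≤ σ y)
    (hρi : Integrable ρ) (hσi : Integrable σ)
    (hρpos : 0 < ∫ x, ρ x) (hρM : (∫ x, ρ x) ≤ M)
    (hσM : (∫ y, σ y) ≤ M)
    (hδ : 0 < δ₀) (hr : 0 < r₀)
    (hconc : δ₀ < ∫ x, ∫ y, (if ‖x - emb y‖ < r₀ then ρ x * σ y else 0)) :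
    ∃ a : E2,
      δ₀^2 / (8 * M^3) < ∫ x in Metric.ball (emb a) (3 * r₀), ρ x ∧
      δ₀^2 / (8 * M^3) < ∫ y in Metric.ball a (3 * r₀), σ y := by
  have hM : 0 < M := hρpos.trans_le hρM
  have hnear : (∫ x, ∫ y, (if ‖x - emb y‖ < r₀ then ρ x * σ y else 0))
      = ∫ x, ∫ y, (nearPairs emb r₀).indicator (fun p => ρ p.1 * σ p.2) (x, y) := by
    simp only [indicator, mem_nearPairs, dist_eq_norm]
  obtain ⟨a, hρa, hσa⟩ := exists_setIntegral_ball_gt_of_lt_integral_integral (ε := δ₀ / (2 * M))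
    isometry_emb hρm hρ0 hσ0 hρi hσi (by positivity) <| calc
      δ₀ / (2 * M) * ((∫ x, ρ x) + ∫ y, σ y) ≤ δ₀ / (2 * M) * (M + M) := by gcongr
      _ = δ₀ := by field_simp; ring
      _ < _ := hnear ▸ hconc
  have hρa_le : ∫ x in ball (emb a) r₀, ρ x ≤ M :=
    (setIntegral_le_integral hρi (ae_of_all _ hρ0)).trans hρM
  have hε : δ₀ ^ 2 / (8 * M ^ 3) ≤ δ₀ / (2 * M) := by
    have : δ₀ < 2 * M ^ 2 := by
      have := hρa.trans_le hρa_le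
      rw [div_lt_iff₀ (by positivity)] at this
      nlinarith
    rw [div_le_div_iff₀ (by positivity) (by positivity)]
    nlinarith [mul_lt_mul_of_pos_left this (mul_pos hδ hM)]
  refine ⟨a, ?_, ?_⟩
  · refine (hε.trans_lt hρa).trans_le ?_
    exact setIntegral_mono_set hρi.integrableOn (ae_of_all _ hρ0)
      (ball_subset_ball (by linarith)).eventuallyLE
  · refine (hε.trans_lt hσa).trans_le ?_
    exact setIntegral_mono_set hσi.integrableOn (ae_of_all _ hσ0)
      (ball_subset_ball (by linarith)).eventuallyLE

/-- joint concentration lemma: if the masses of `ρ` on `ℝ³` and `σ` on `ℝ²`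
are positive and bounded by `M` and the joint mass near the plane within distance `r₀`
exceeds `δ₀`, then with `ε₀ = δ₀²/(8M³)` and `R₀ = 3r₀` there is a common center
`ã ∈ ℝ²` carrying mass `> ε₀` of both densities. -/
theorem statement9 (ρ : E3 → ℝ) (σ : E2 → ℝ) (M δ₀ r₀ : ℝ)
    (hρm : Measurable ρ) (hσm : Measurable σ)
    (hρ0 : ∀ x, 0 ≤ ρ x) (hσ0 : ∀ y, 0 ≤ σ y)
    (hρi : Integrable ρ) (hσi : Integrable σ)
    (hρpos : 0 < ∫ x, ρ x) (hρM : (∫ x, ρ x) ≤ M)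
    (hσpos : 0 < ∫ y, σ y) (hσM : (∫ y, σ y) ≤ M)
    (hδ : 0 < δ₀) (hr : 0 < r₀)
    (hconc : δ₀ < ∫ x, ∫ y, (if ‖x - emb y‖ < r₀ then ρ x * σ y else 0)) :
    ∃ a : E2,
      δ₀^2 / (8 * M^3) < ∫ x in Metric.ball (emb a) (3 * r₀), ρ x ∧
      δ₀^2 / (8 * M^3) < ∫ y in Metric.ball a (3 * r₀), σ y :=
  statement9_general ρ σ M δ₀ r₀ hρm hρ0 hσ0 hρi hσi hρpos hρM hσM hδ hr hconc
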